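/- arXiv:1811.00978 — 3 statements merged into one kernel-verified Lean document; each statement's English description precedes it below -/
import Mathlib

section
/- Let T be a finite rooted dyadic tree with boundary ∂T, and let g, G : T → ℝ≥0 be functions on the vertices of T. Suppose g is two-point superharmonic, meaning g(τ) ≥ g(τ⁺) + g(τ⁻) for every internal vertex τ with children τ⁺, τ⁻, and G is two-point harmonic, meaning G(τ) = G(τ⁺) + G(τ⁻) for every internal vertex τ. Define Ig(α) = Σ_{β ≥ α} g(β) (sum over ancestors of α including α) and similarly IG. If IG(ω) ≤ Ig(ω) for every boundary vertex ω ∈ ∂T with G(ω) > 0, then IG(α) ≤ Ig(α) for all vertices α ∈ T. -/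
open Finset
open scoped Classical

noncomputable section

variable {V : Type*} [Fintype V] [PartialOrder V]

/-- Hardy operator I on the tree: sum over ancestors (larger elements). -/
def hI (f : V → ℝ) (a : V) : ℝ :=
  ∑ b ∈ Finset.univ.filter (fun b => a ≤ b), f b

/-- Adjoint Hardy operator I*: sum over descendants (smaller elements). -/
def hIs (f : V → ℝ) (a : V) : ℝ :=
  ∑ b ∈ Finset.univ.filter (fun b => b ≤ a), f b

/-- Potential V^μ = I(I*μ). -/
def pot (μ : V → ℝ) : V → ℝ := hI (hIs μ)

/-- `τ₁` and `τ₂` are precisely the two children of the internal vertex `τ`. -/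
def ChildPair (τ τ₁ τ₂ : V) : Prop :=
  τ₁ ≠ τ₂ ∧ τ₁ ⋖ τ ∧ τ₂ ⋖ τ ∧ ∀ x : V, x ⋖ τ → x = τ₁ ∨ x = τ₂

/-!
Put `u = G - g`. Harmonicity of `G` and superharmonicity of `g` make `u` subadditive over
children, `u τ ≤ u τ₁ + u τ₂`, and the claim is `I u ≤ 0`. At a counterexample `α` that is
maximal, `I u α = u α + I u (parent α)` forces `u α > 0`. Going down, one child `c` of a
vertex with `u > 0` again has `u c > 0`, and then `I u c = u c + I u (parent c) > 0` as well;
so the descent ends at a leaf with `G > g ≥ 0` and `I G > I g`, against the boundary hypothesis.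
-/

theorem hI_sub (f f' : V → ℝ) (a : V) : hI (f - f') a = hI f a - hI f' a := by
  simp only [hI, Pi.sub_apply, Finset.sum_sub_distrib]

theorem hI_of_isMax (f : V → ℝ) {a : V} (ha : IsMax a) : hI f a = f a := by
  have : Finset.univ.filter (fun b => a ≤ b) = {a} := by
    ext b
    simpa [eq_comm] using ⟨ha.eq_of_le, fun h : a = b => h.le⟩
  rw [hI, this, Finset.sum_singleton]

theorem hI_eq_add_of_covBy (htree : ∀ a b c : V, a ≤ b → a ≤ c → b ≤ c ∨ c ≤ b)
    (f : V → ℝ) {a b : V} (hab : a ⋖ b) : hI f a = f a + hI f b := by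
  have hfilter : Finset.univ.filter (fun x => a ≤ x)
      = insert a (Finset.univ.filter (fun x => b ≤ x)) := by
    ext x
    simp only [mem_filter, mem_insert, mem_univ, true_and]
    constructor
    · intro hax
      rcases hax.eq_or_lt with rfl | hlt
      · exact Or.inl rfl
      rcases htree a x b hax hab.le with hxb | hbx
      · rcases hxb.lt_or_eq with hxb | rfl
        exacts [(hab.2 hlt hxb).elim, Or.inr le_rfl]
      · exact Or.inr hbx
    · rintro (rfl | hbx)
      exacts [le_rfl, hab.le.trans hbx]
  have ha : a ∉ Finset.univ.filter (fun x => b ≤ x) := by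
    simpa using hab.lt.not_ge
  rw [hI, hfilter, Finset.sum_insert ha, hI]

theorem pos_of_hI_pos_of_forall_lt (htree : ∀ a b c : V, a ≤ b → a ≤ c → b ≤ c ∨ c ≤ b)
    {u : V → ℝ} {a : V} (ha : 0 < hI u a) (hup : ∀ b, a < b → hI u b ≤ 0) : 0 < u a := by
  by_cases hmax : IsMax a
  · rwa [hI_of_isMax u hmax] at ha
  · obtain ⟨b, hab⟩ := exists_covBy_of_wellFoundedLT hmax
    linarith [hI_eq_add_of_covBy htree u hab, hup b hab.lt]

theorem exists_isMin_pos_and_hI_pos (htree : ∀ a b c : V, a ≤ b → a ≤ c → b ≤ c ∨ c ≤ b)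
    (hbin : ∀ τ : V, ¬ IsMin τ → ∃ τ₁ τ₂ : V, ChildPair τ τ₁ τ₂) {u : V → ℝ}
    (hsub : ∀ τ τ₁ τ₂ : V, ChildPair τ τ₁ τ₂ → u τ ≤ u τ₁ + u τ₂) (a : V) :
    0 < u a → 0 < hI u a → ∃ ω, IsMin ω ∧ 0 < u ω ∧ 0 < hI u ω := by
  induction a using WellFoundedLT.induction with
  | ind a ih =>
    intro hua hIua
    by_cases hmin : IsMin a
    · exact ⟨a, hmin, hua, hIua⟩
    obtain ⟨τ₁, τ₂, hchild⟩ := hbin a hmin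
    obtain ⟨c, hca, huc⟩ : ∃ c, c ⋖ a ∧ 0 < u c := by
      by_contra! h
      linarith [hsub a τ₁ τ₂ hchild, h τ₁ hchild.2.1, h τ₂ hchild.2.2.1]
    exact ih c hca.lt huc (by linarith [hI_eq_add_of_covBy htree u hca])

theorem hI_nonpos_of_subadditive (htree : ∀ a b c : V, a ≤ b → a ≤ c → b ≤ c ∨ c ≤ b)
    (hbin : ∀ τ : V, ¬ IsMin τ → ∃ τ₁ τ₂ : V, ChildPair τ τ₁ τ₂) {u : V → ℝ}
    (hsub : ∀ τ τ₁ τ₂ : V, ChildPair τ τ₁ τ₂ → u τ ≤ u τ₁ + u τ₂)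
    (hleaf : ∀ ω : V, IsMin ω → 0 < u ω → hI u ω ≤ 0) (a : V) : hI u a ≤ 0 := by
  induction a using WellFoundedGT.induction with
  | ind a ih =>
    by_contra! ha
    obtain ⟨ω, hω, huω, hIuω⟩ :=
      exists_isMin_pos_and_hI_pos htree hbin hsub a (pos_of_hI_pos_of_forall_lt htree ha ih) ha
    exact (hleaf ω hω huω).not_gt hIuω

theorem stmt0_general
    (htree : ∀ a b c : V, a ≤ b → a ≤ c → b ≤ c ∨ c ≤ b)
    (hbin : ∀ τ : V, ¬ IsMin τ → ∃ τ₁ τ₂ : V, ChildPair τ τ₁ τ₂)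
    (g G : V → ℝ) (hg0 : ∀ a : V, 0 ≤ g a)
    (hsuper : ∀ τ τ₁ τ₂ : V, ChildPair τ τ₁ τ₂ → g τ₁ + g τ₂ ≤ g τ)
    (hharm : ∀ τ τ₁ τ₂ : V, ChildPair τ τ₁ τ₂ → G τ = G τ₁ + G τ₂)
    (hbdry : ∀ ω : V, IsMin ω → 0 < G ω → hI G ω ≤ hI g ω) :
    ∀ α : V, hI G α ≤ hI g α := by
  have hsub : ∀ τ τ₁ τ₂ : V, ChildPair τ τ₁ τ₂ → (G - g) τ ≤ (G - g) τ₁ + (G - g) τ₂ := by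
    intro τ τ₁ τ₂ h
    simp only [Pi.sub_apply]
    linarith [hsuper τ τ₁ τ₂ h, hharm τ τ₁ τ₂ h]
  have hleaf : ∀ ω : V, IsMin ω → 0 < (G - g) ω → hI (G - g) ω ≤ 0 := by
    intro ω hω hpos
    rw [hI_sub, sub_nonpos]
    exact hbdry ω hω (by linarith [hg0 ω, show g ω < G ω from sub_pos.mp hpos])
  intro α
  have := hI_nonpos_of_subadditive htree hbin hsub hleaf α
  rwa [hI_sub, sub_nonpos] at this

/-- Minimum principle on the tree: if `g` is two-point superharmonic, `G` is two-point
harmonic, and `IG ≤ Ig` on every boundary (leaf) vertex where `G > 0`, then `IG ≤ Ig`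
on the whole tree. -/
theorem stmt0 [OrderTop V]
    (htree : ∀ a b c : V, a ≤ b → a ≤ c → b ≤ c ∨ c ≤ b)
    (hbin : ∀ τ : V, ¬ IsMin τ → ∃ τ₁ τ₂ : V, ChildPair τ τ₁ τ₂)
    (g G : V → ℝ) (hg0 : ∀ a : V, 0 ≤ g a) (hG0 : ∀ a : V, 0 ≤ G a)
    (hsuper : ∀ τ τ₁ τ₂ : V, ChildPair τ τ₁ τ₂ → g τ₁ + g τ₂ ≤ g τ)
    (hharm : ∀ τ τ₁ τ₂ : V, ChildPair τ τ₁ τ₂ → G τ = G τ₁ + G τ₂)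
    (hbdry : ∀ ω : V, IsMin ω → 0 < G ω → hI G ω ≤ hI g ω) :
    ∀ α : V, hI G α ≤ hI g α :=
  stmt0_general htree hbin g G hg0 hsuper hharm hbdry

end
end

section
/- Let T be a finite rooted binary tree and g : T → ℝ≥0 a two-point superharmonic function, i.e. g(τ) ≥ g(τ⁺) + g(τ⁻) for every internal vertex τ with children τ⁺, τ⁻. Then Ig (where Ig(α) = Σ_{β ≥ α} g(β)) is three-point superharmonic: for every internal non-root vertex τ with children τ⁺, τ⁻ and parent τ̂, one has Ig(τ) ≥ (1/3)(Ig(τ⁺) + Ig(τ⁻) + Ig(τ̂)). -/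
open Finset
open scoped Classical

noncomputable section

variable {V : Type*} [Fintype V] [PartialOrder V]

lemma hI_covby_aux (htree : ∀ a b c : V, a ≤ b → a ≤ c → b ≤ c ∨ c ≤ b)
    (g : V → ℝ) (a b : V) (hab : a ⋖ b) : hI g a = g a + hI g b := by
  have hset : Finset.univ.filter (fun c => a ≤ c)
      = insert a (Finset.univ.filter (fun c => b ≤ c)) := by
    ext c
    simp only [Finset.mem_filter, Finset.mem_univ, true_and, Finset.mem_insert]
    constructor
    · intro hac
      rcases eq_or_lt_of_le hac with h | h
      · exact Or.inl h.symm
      · right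
        rcases htree a b c hab.le hac with h' | h'
        · exact h'
        · rcases eq_or_lt_of_le h' with h'' | h''
          · exact h''.ge
          · exact absurd h'' (hab.2 h)
    · rintro (rfl | h)
      · exact le_rfl
      · exact hab.le.trans h
  have hnot : a ∉ Finset.univ.filter (fun c => b ≤ c) := by
    simp only [Finset.mem_filter, Finset.mem_univ, true_and]
    exact fun h => absurd (h.trans_lt hab.lt) (lt_irrefl b)
  rw [hI, hset, Finset.sum_insert hnot, hI]

/-- If `g` is two-point superharmonic then `Ig` is three-point superharmonic: for every
internal non-root vertex `τ` with children `τ₁, τ₂` and parent `τ̂`,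
`Ig(τ) ≥ (1/3)(Ig(τ₁) + Ig(τ₂) + Ig(τ̂))`. -/
theorem stmt1 [OrderTop V]
    (htree : ∀ a b c : V, a ≤ b → a ≤ c → b ≤ c ∨ c ≤ b)
    (g : V → ℝ) (hg0 : ∀ a : V, 0 ≤ g a)
    (hsuper : ∀ τ τ₁ τ₂ : V, ChildPair τ τ₁ τ₂ → g τ₁ + g τ₂ ≤ g τ) :
    ∀ τ τ₁ τ₂ τp : V, ChildPair τ τ₁ τ₂ → τ ⋖ τp →
      (1 / 3) * (hI g τ₁ + hI g τ₂ + hI g τp) ≤ hI g τ := by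
  intro τ τ₁ τ₂ τp hcp hc
  have h1 := hI_covby_aux htree g τ₁ τ hcp.2.1
  have h2 := hI_covby_aux htree g τ₂ τ hcp.2.2.1
  have h3 := hI_covby_aux htree g τ τp hc
  have hs := hsuper τ τ₁ τ₂ hcp
  linarith

end
end

section
/- Let (b_k)_{k ≥ 0} be nonnegative reals and suppose S = Σ_k 2^{2k} b_k < ∞. Then Σ_k Σ_{j < k} 2^{j+k} b_k^{4/7} b_j^{3/7} ≤ C·S for an absolute constant C, where the double sum is estimated via Σ_k 2^{8k/7} b_k^{4/7} · 2^{-k/7} Σ_{j ≤ k} 2^j b_j^{3/7} and Hölder's inequality with exponents 7/4 and 7/3. -/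
open Finset

/-- Off-diagonal summation estimate: for nonnegative (b_k) with S = Σ_k 2^{2k} b_k < ∞,
Σ_k Σ_{j<k} 2^{j+k} b_k^{4/7} b_j^{3/7} ≤ C·S for an absolute constant C. -/
theorem stmt12 :
    ∃ C : ℝ, 0 < C ∧ ∀ (b : ℕ → ℝ), (∀ k, 0 ≤ b k) →
      Summable (fun k : ℕ => (2 : ℝ) ^ (2 * k) * b k) →
      ∀ N : ℕ,
        ∑ k ∈ Finset.range N, ∑ j ∈ Finset.range k,
            (2 : ℝ) ^ (j + k) * b k ^ ((4 : ℝ) / 7) * b j ^ ((3 : ℝ) / 7) ≤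
          C * ∑' k : ℕ, (2 : ℝ) ^ (2 * k) * b k := by
  have h2 : (0:ℝ) < 2 := by norm_num
  set r : ℝ := (2:ℝ) ^ (-(1:ℝ)/7) with hrdef
  have hr0 : 0 < r := Real.rpow_pos_of_pos h2 _
  have hr1 : r < 1 := Real.rpow_lt_one_of_one_lt_of_neg (by norm_num) (by norm_num)
  set c : ℝ := (1 - r)⁻¹ with hcdef
  have hc0 : 0 < c := inv_pos.2 (by linarith)
  -- geometric sum bound
  have hgeom : ∀ n : ℕ, ∑ i ∈ Finset.range n, r ^ i ≤ c := by
    intro n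
    have := Summable.sum_le_tsum (Finset.range n) (fun i _ => pow_nonneg hr0.le i)
      (summable_geometric_of_lt_one hr0.le hr1)
    rwa [tsum_geometric_of_lt_one hr0.le hr1] at this
  refine ⟨2 * c, by positivity, ?_⟩
  intro b hb hsum N
  set a : ℕ → ℝ := fun k => (2:ℝ) ^ (2*k) * b k with ha
  have ha0 : ∀ k, 0 ≤ a k := fun k => mul_nonneg (by positivity) (hb k)
  set S := ∑' k, a k with hSdef
  have hS0 : 0 ≤ S := tsum_nonneg ha0
  have hpartial : ∀ s : Finset ℕ, ∑ k ∈ s, a k ≤ S :=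
    fun s => Summable.sum_le_tsum s (fun i _ => ha0 i) hsum
  -- pointwise key bound
  have key : ∀ j k : ℕ, j < k →
      (2:ℝ)^(j+k) * b k ^ ((4:ℝ)/7) * b j ^ ((3:ℝ)/7) ≤ r^(k-j) * a k + r^(k-j) * a j := by
    intro j k hjk
    have hkj : ((k - j : ℕ) : ℝ) = (k:ℝ) - j := by
      have := hjk.le; push_cast [Nat.cast_sub this]; ring
    have heq : (2:ℝ)^(j+k) * b k ^ ((4:ℝ)/7) * b j ^ ((3:ℝ)/7)
        = r^(k-j) * ((a k) ^ ((4:ℝ)/7) * (a j) ^ ((3:ℝ)/7)) := by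
      have e1 : r ^ (k - j) = (2:ℝ) ^ ((-(1:ℝ)/7) * ((k:ℝ) - j)) := by
        rw [hrdef, ← Real.rpow_natCast ((2:ℝ) ^ (-(1:ℝ)/7)) (k-j),
          ← Real.rpow_mul h2.le, hkj]
      have e2 : ∀ m : ℕ, ((2:ℝ) ^ (2*m) : ℝ) = (2:ℝ) ^ ((2:ℝ)*m) := by
        intro m
        rw [← Real.rpow_natCast 2 (2*m)]
        norm_num
      have e3 : ((2:ℝ) ^ (j+k) : ℝ) = (2:ℝ) ^ ((j:ℝ)+k) := by
        rw [← Real.rpow_natCast 2 (j+k)]; norm_num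
      rw [ha]
      simp only []
      rw [Real.mul_rpow (by positivity) (hb k), Real.mul_rpow (by positivity) (hb j),
        e1, e2, e2, e3, ← Real.rpow_mul h2.le, ← Real.rpow_mul h2.le]
      rw [show ((j:ℝ)+k) = (-(1:ℝ)/7) * ((k:ℝ) - j) + (((2:ℝ)*k) * (4/7) + ((2:ℝ)*j) * (3/7))
        by ring, Real.rpow_add h2, Real.rpow_add h2]
      ring
    rw [heq]
    have hgm : (a k) ^ ((4:ℝ)/7) * (a j) ^ ((3:ℝ)/7) ≤ (4:ℝ)/7 * a k + (3:ℝ)/7 * a j :=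
      Real.geom_mean_le_arith_mean2_weighted (by norm_num) (by norm_num) (ha0 k) (ha0 j)
        (by norm_num)
    have hrp : 0 ≤ r ^ (k - j) := pow_nonneg hr0.le _
    nlinarith [ha0 k, ha0 j]
  -- bound the double sum
  have inner1 : ∀ k : ℕ, ∑ j ∈ Finset.range k, r^(k-j) ≤ c := by
    intro k
    rw [← Finset.sum_range_reflect]
    calc ∑ j ∈ Finset.range k, r ^ (k - (k - 1 - j))
        ≤ ∑ j ∈ Finset.range k, r ^ j := by
          apply Finset.sum_le_sum
          intro j hj
          have hjk : j < k := Finset.mem_range.mp hj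
          have : j ≤ k - (k - 1 - j) := by omega
          exact pow_le_pow_of_le_one hr0.le hr1.le this
      _ ≤ c := hgeom k
  have step1 : ∑ k ∈ Finset.range N, ∑ j ∈ Finset.range k, r^(k-j) * a k ≤ c * S := by
    calc ∑ k ∈ Finset.range N, ∑ j ∈ Finset.range k, r^(k-j) * a k
        = ∑ k ∈ Finset.range N, (∑ j ∈ Finset.range k, r^(k-j)) * a k := by
          simp [Finset.sum_mul]
      _ ≤ ∑ k ∈ Finset.range N, c * a k := by
          apply Finset.sum_le_sum
          intro k _
          exact mul_le_mul_of_nonneg_right (inner1 k) (ha0 k)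
      _ = c * ∑ k ∈ Finset.range N, a k := by rw [Finset.mul_sum]
      _ ≤ c * S := mul_le_mul_of_nonneg_left (hpartial _) hc0.le
  have step2 : ∑ k ∈ Finset.range N, ∑ j ∈ Finset.range k, r^(k-j) * a j ≤ c * S := by
    have hswap : ∑ k ∈ Finset.range N, ∑ j ∈ Finset.range k, r^(k-j) * a j
        = ∑ j ∈ Finset.range N, ∑ k ∈ Finset.Ico (j+1) N, r^(k-j) * a j := by
      have := Finset.sum_Ico_Ico_comm' 0 N (fun j k => r^(k-j) * a j)
      simp only [Finset.range_eq_Ico]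
      exact this.symm
    rw [hswap]
    have innerb : ∀ j : ℕ, ∑ k ∈ Finset.Ico (j+1) N, r^(k-j) ≤ c := by
      intro j
      rw [Finset.sum_Ico_eq_sum_range]
      calc ∑ i ∈ Finset.range (N - (j+1)), r ^ (j + 1 + i - j)
          ≤ ∑ i ∈ Finset.range (N - (j+1)), r ^ i := by
            apply Finset.sum_le_sum
            intro i _
            exact pow_le_pow_of_le_one hr0.le hr1.le (by omega)
        _ ≤ c := hgeom _
    calc ∑ j ∈ Finset.range N, ∑ k ∈ Finset.Ico (j+1) N, r^(k-j) * a j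
        = ∑ j ∈ Finset.range N, (∑ k ∈ Finset.Ico (j+1) N, r^(k-j)) * a j := by
          simp [Finset.sum_mul]
      _ ≤ ∑ j ∈ Finset.range N, c * a j := by
          apply Finset.sum_le_sum
          intro j _
          exact mul_le_mul_of_nonneg_right (innerb j) (ha0 j)
      _ = c * ∑ j ∈ Finset.range N, a j := by rw [Finset.mul_sum]
      _ ≤ c * S := mul_le_mul_of_nonneg_left (hpartial _) hc0.le
  calc ∑ k ∈ Finset.range N, ∑ j ∈ Finset.range k,
        (2:ℝ)^(j+k) * b k ^ ((4:ℝ)/7) * b j ^ ((3:ℝ)/7)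
      ≤ ∑ k ∈ Finset.range N, ∑ j ∈ Finset.range k, (r^(k-j) * a k + r^(k-j) * a j) := by
        apply Finset.sum_le_sum
        intro k _
        apply Finset.sum_le_sum
        intro j hj
        exact key j k (Finset.mem_range.mp hj)
    _ = ∑ k ∈ Finset.range N, ∑ j ∈ Finset.range k, r^(k-j) * a k
        + ∑ k ∈ Finset.range N, ∑ j ∈ Finset.range k, r^(k-j) * a j := by
        rw [← Finset.sum_add_distrib]
        congr 1
        ext k
        rw [← Finset.sum_add_distrib]
    _ ≤ c * S + c * S := add_le_add step1 step2
    _ = 2 * c * S := by ring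
end
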